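/- The cycles C_3 and C_7 satisfy γ_t^d(C_3) = 2 = (3+1)/2 and γ_t^d(C_7) = 4 = (7+1)/2; these are the only cycles C_n with γ_t^d(C_n) = (n+1)/2. -/
import Mathlib
open SimpleGraph

def IsDTDSet {V : Type*} (G : SimpleGraph V) (S : Finset V) : Prop :=
  ∀ v : V, (∃ u ∈ S, G.Adj v u) ∨
    ∃ u ∈ S, ∃ w ∈ S, u ≠ w ∧ G.dist v u = 2 ∧ G.dist v w = 2

noncomputable def dtdNum {V : Type*} (G : SimpleGraph V) : ℕ :=
  sInf {k | ∃ S : Finset V, IsDTDSet G S ∧ S.card = k}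


def cycleG (n : ℕ) : SimpleGraph (Fin n) :=
  SimpleGraph.fromRel (fun a b => ((a : ℕ) + 1) % n = (b : ℕ))

lemma cycleG_adj {n : ℕ} (a b : Fin n) :
    (cycleG n).Adj a b ↔ a ≠ b ∧ (((a:ℕ)+1) % n = b ∨ ((b:ℕ)+1) % n = a) :=
  SimpleGraph.fromRel_adj _ _ _

lemma dist_eq_two_iff {V : Type*} (G : SimpleGraph V) (v u : V) :
    G.dist v u = 2 ↔ v ≠ u ∧ ¬G.Adj v u ∧ ∃ w, G.Adj v w ∧ G.Adj w u := by
  constructor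
  · intro h
    obtain ⟨p, hp⟩ := SimpleGraph.exists_walk_of_dist_ne_zero (by omega : G.dist v u ≠ 0)
    rw [h] at hp
    refine ⟨?_, ?_, ?_⟩
    · rintro rfl; rw [SimpleGraph.dist_self] at h; omega
    · intro hadj
      have := SimpleGraph.dist_eq_one_iff_adj.mpr hadj
      omega
    · cases p with
      | nil => simp at hp
      | cons hadj q =>
        cases q with
        | nil => simp at hp
        | cons hadj2 q2 =>
          cases q2 with
          | nil => exact ⟨_, hadj, hadj2⟩
          | cons h3 q3 => simp [SimpleGraph.Walk.length_cons] at hp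
  · rintro ⟨hne, hnadj, w, h1, h2⟩
    have hle : G.dist v u ≤ 2 := by
      have := SimpleGraph.dist_le (SimpleGraph.Walk.cons h1 (SimpleGraph.Walk.cons h2 SimpleGraph.Walk.nil))
      simpa using this
    have h0 : G.dist v u ≠ 0 := by
      rw [SimpleGraph.dist_ne_zero_iff_ne_and_reachable]
      exact ⟨hne, ⟨SimpleGraph.Walk.cons h1 (SimpleGraph.Walk.cons h2 SimpleGraph.Walk.nil)⟩⟩
    have h1' : G.dist v u ≠ 1 := fun hc => hnadj (SimpleGraph.dist_eq_one_iff_adj.mp hc)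
    omega

lemma cycleG_adj_iff {n : ℕ} (hn : 3 ≤ n) {a b : ℕ} (ha : a < n) (hb : b < n) :
    (cycleG n).Adj ⟨a, ha⟩ ⟨b, hb⟩ ↔
      (a + 1 = b ∨ b + 1 = a ∨ (a = n - 1 ∧ b = 0) ∨ (b = n - 1 ∧ a = 0)) := by
  rw [cycleG_adj]
  simp only [ne_eq, Fin.mk.injEq]
  rcases Nat.lt_or_ge (a+1) n with h1 | h1 <;> rcases Nat.lt_or_ge (b+1) n with h2 | h2
  · rw [Nat.mod_eq_of_lt h1, Nat.mod_eq_of_lt h2]; omega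
  · have hb2 : b + 1 = n := by omega
    rw [Nat.mod_eq_of_lt h1, hb2, Nat.mod_self]; omega
  · have ha2 : a + 1 = n := by omega
    rw [Nat.mod_eq_of_lt h2, ha2, Nat.mod_self]; omega
  · omega

lemma cycleG_dist_two {n : ℕ} (hn : 5 ≤ n) {a b : ℕ} (ha : a < n) (hb : b < n)
    (h : a + 2 = b ∨ b + 2 = a ∨ (a + 2 = n ∧ b = 0) ∨ (b + 2 = n ∧ a = 0) ∨
      (a + 1 = n ∧ b = 1) ∨ (b + 1 = n ∧ a = 1)) :
    (cycleG n).dist ⟨a, ha⟩ ⟨b, hb⟩ = 2 := by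
  have h3 : 3 ≤ n := by omega
  rw [dist_eq_two_iff]
  refine ⟨by simp only [ne_eq, Fin.mk.injEq]; omega,
    by rw [cycleG_adj_iff h3]; omega, ?_⟩
  rcases h with h | h | h | h | h | h
  · exact ⟨⟨a+1, by omega⟩, (cycleG_adj_iff h3 _ _).mpr (by omega),
      (cycleG_adj_iff h3 _ _).mpr (by omega)⟩
  · exact ⟨⟨b+1, by omega⟩, (cycleG_adj_iff h3 _ _).mpr (by omega),
      (cycleG_adj_iff h3 _ _).mpr (by omega)⟩
  · exact ⟨⟨a+1, by omega⟩, (cycleG_adj_iff h3 _ _).mpr (by omega),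
      (cycleG_adj_iff h3 _ _).mpr (by omega)⟩
  · exact ⟨⟨n-1, by omega⟩, (cycleG_adj_iff h3 _ _).mpr (by omega),
      (cycleG_adj_iff h3 _ _).mpr (by omega)⟩
  · exact ⟨⟨0, by omega⟩, (cycleG_adj_iff h3 _ _).mpr (by omega),
      (cycleG_adj_iff h3 _ _).mpr (by omega)⟩
  · exact ⟨⟨0, by omega⟩, (cycleG_adj_iff h3 _ _).mpr (by omega),
      (cycleG_adj_iff h3 _ _).mpr (by omega)⟩

lemma count5 (n : ℕ) :
    ((Finset.range n).filter (fun a => a % 5 ≤ 1)).card = 2 * (n / 5) + min (n % 5) 2 := by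
  induction n with
  | zero => simp
  | succ n ih =>
    rw [Finset.range_add_one, Finset.filter_insert]
    split
    · rw [Finset.card_insert_of_notMem (by simp), ih]
      omega
    · rw [ih]; omega

lemma exists_small (n : ℕ) (h5 : 5 ≤ n) (h7 : n ≠ 7) (hodd : n % 2 = 1) :
    ∃ S : Finset (Fin n), IsDTDSet (cycleG n) S ∧ 2 * S.card + 2 ≤ n + 1 := by
  have h3 : 3 ≤ n := by omega
  refine ⟨Finset.univ.filter (fun v : Fin n => v.val % 5 ≤ 1), ?_, ?_⟩
  · rintro ⟨a, ha⟩
    simp only [Finset.mem_filter, Finset.mem_univ, true_and]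
    rcases Nat.lt_or_ge (a % 5) 3 with hm | hm
    · rcases Nat.lt_or_ge (a % 5) 2 with hm2 | hm2
      · -- a % 5 ∈ {0, 1} : pick a neighbor
        rcases Nat.eq_zero_or_pos (a % 5) with hz | hp
        · -- a % 5 = 0
          rcases Nat.lt_or_ge (a + 1) n with hlt | hge
          · exact Or.inl ⟨⟨a+1, hlt⟩, by simp only [Fin.val_mk]; omega, (cycleG_adj_iff h3 _ _).mpr (by omega)⟩
          · exact Or.inl ⟨⟨0, by omega⟩, by simp only [Fin.val_mk]; omega, (cycleG_adj_iff h3 _ _).mpr (by omega)⟩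
        · -- a % 5 = 1
          exact Or.inl ⟨⟨a-1, by omega⟩, by simp only [Fin.val_mk]; omega, (cycleG_adj_iff h3 _ _).mpr (by omega)⟩
      · -- a % 5 = 2
        exact Or.inl ⟨⟨a-1, by omega⟩, by simp only [Fin.val_mk]; omega, (cycleG_adj_iff h3 _ _).mpr (by omega)⟩
    · rcases Nat.lt_or_ge (a % 5) 4 with hm4 | hm4
      · -- a % 5 = 3 : use the two distance-2 vertices
        right
        have ha3 : 3 ≤ a := by omega
        rcases Nat.lt_or_ge (a + 2) n with hlt | hge
        · exact ⟨⟨a-2, by omega⟩, by simp only [Fin.val_mk]; omega, ⟨a+2, hlt⟩, by simp only [Fin.val_mk]; omega,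
            by simp only [ne_eq, Fin.mk.injEq]; omega,
            cycleG_dist_two h5 _ _ (by omega), cycleG_dist_two h5 _ _ (by omega)⟩
        · rcases Nat.lt_or_ge (a + 1) n with hlt1 | hge1
          · -- a + 2 = n
            exact ⟨⟨a-2, by omega⟩, by simp only [Fin.val_mk]; omega, ⟨0, by omega⟩, by simp only [Fin.val_mk]; omega,
              by simp only [ne_eq, Fin.mk.injEq]; omega,
              cycleG_dist_two h5 _ _ (by omega), cycleG_dist_two h5 _ _ (by omega)⟩
          · -- a + 1 = n
            exact ⟨⟨a-2, by omega⟩, by simp only [Fin.val_mk]; omega, ⟨1, by omega⟩, by simp only [Fin.val_mk]; omega,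
              by simp only [ne_eq, Fin.mk.injEq]; omega,
              cycleG_dist_two h5 _ _ (by omega), cycleG_dist_two h5 _ _ (by omega)⟩
      · -- a % 5 = 4
        rcases Nat.lt_or_ge (a + 1) n with hlt | hge
        · exact Or.inl ⟨⟨a+1, hlt⟩, by simp only [Fin.val_mk]; omega, (cycleG_adj_iff h3 _ _).mpr (by omega)⟩
        · exact Or.inl ⟨⟨0, by omega⟩, by simp only [Fin.val_mk]; omega, (cycleG_adj_iff h3 _ _).mpr (by omega)⟩
  · have hcard : (Finset.univ.filter (fun v : Fin n => v.val % 5 ≤ 1)).card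
        = ((Finset.range n).filter (fun a => a % 5 ≤ 1)).card := by
      rw [← Finset.card_map ⟨Fin.val, Fin.val_injective⟩]
      congr 1
      ext b
      simp only [Finset.mem_map, Finset.mem_filter, Finset.mem_univ, true_and,
        Function.Embedding.coeFn_mk, Finset.mem_range]
      constructor
      · rintro ⟨v, hv, rfl⟩; exact ⟨v.isLt, hv⟩
      · rintro ⟨hb, hp⟩; exact ⟨⟨b, hb⟩, hp, rfl⟩
    rw [hcard, count5]
    omega

instance cycleG_decAdj (n : ℕ) : DecidableRel (cycleG n).Adj := fun a b =>
  decidable_of_iff' _ (cycleG_adj a b)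

def DTD2 {n : ℕ} (S : Finset (Fin n)) : Prop :=
  ∀ v : Fin n, (∃ u ∈ S, (cycleG n).Adj v u) ∨
    ∃ u ∈ S, ∃ w ∈ S, u ≠ w ∧
      (v ≠ u ∧ ¬(cycleG n).Adj v u ∧ ∃ x, (cycleG n).Adj v x ∧ (cycleG n).Adj x u) ∧
      (v ≠ w ∧ ¬(cycleG n).Adj v w ∧ ∃ x, (cycleG n).Adj v x ∧ (cycleG n).Adj x w)

instance {n : ℕ} (S : Finset (Fin n)) : Decidable (DTD2 S) := by
  unfold DTD2; infer_instance

lemma isDTD_iff_DTD2 {n : ℕ} (S : Finset (Fin n)) :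
    IsDTDSet (cycleG n) S ↔ DTD2 S := by
  unfold IsDTDSet DTD2
  simp only [dist_eq_two_iff]

lemma dtdNum_eq {n k : ℕ} (hex : ∃ S : Finset (Fin n), DTD2 S ∧ S.card = k)
    (hlb : ∀ S : Finset (Fin n), DTD2 S → k ≤ S.card) :
    dtdNum (cycleG n) = k := by
  obtain ⟨S, hS, hc⟩ := hex
  have hmem : k ∈ {m | ∃ S : Finset (Fin n), IsDTDSet (cycleG n) S ∧ S.card = m} :=
    ⟨S, (isDTD_iff_DTD2 S).mpr hS, hc⟩
  refine le_antisymm (Nat.sInf_le hmem) (le_csInf ⟨k, hmem⟩ ?_)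
  rintro m ⟨T, hT, rfl⟩
  exact hlb T ((isDTD_iff_DTD2 T).mp hT)

set_option maxRecDepth 100000 in
lemma dtd3 : dtdNum (cycleG 3) = 2 :=
  dtdNum_eq (by decide) (by decide)

set_option maxRecDepth 100000 in
lemma dtd7 : dtdNum (cycleG 7) = 4 :=
  dtdNum_eq (by decide) (by decide)

/-- γ_t^d(C_3) = 2 = (3+1)/2 and γ_t^d(C_7) = 4 = (7+1)/2, and these are the
only cycles with γ_t^d(C_n) = (n+1)/2. -/
theorem dtd_c3_c7 :
    dtdNum (cycleG 3) = 2 ∧ dtdNum (cycleG 7) = 4 ∧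
      ∀ n : ℕ, 3 ≤ n → (2 * dtdNum (cycleG n) = n + 1 ↔ n = 3 ∨ n = 7) := by
  refine ⟨dtd3, dtd7, fun n hn => ?_⟩
  constructor
  · intro h
    by_contra hne
    push_neg at hne
    obtain ⟨h3, h7⟩ := hne
    have hodd : n % 2 = 1 := by omega
    have h5 : 5 ≤ n := by omega
    obtain ⟨S, hS, hcard⟩ := exists_small n h5 h7 hodd
    have hle : dtdNum (cycleG n) ≤ S.card := Nat.sInf_le ⟨S, hS, rfl⟩
    omega
  · rintro (rfl | rfl)
    · rw [dtd3]
    · rw [dtd7]
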